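/- Let N be an integer with N > 2 and N ≠ 4, and let β ∈ ℝ satisfy −1/(4(N−1)) ≤ β ≤ 0. Then there exists a constant c > 0, depending only on N and β, such that for every r > 0, 0 ≤ ∫_0^r G(τ, r) dτ ≤ c·r⁴, where G is defined as in the context (extended by G(0,r) = 0). -/

import Mathlib

open intervalIntegral

/-- `G₁(τ,s) = ∫_τ^s τ^{N−1}/u^{N−1} du`. -/
noncomputable def G₁ (N : ℕ) (τ s : ℝ) : ℝ :=
  ∫ u in τ..s, (τ : ℝ) ^ (N - 1) / u ^ (N - 1)

/-- `H₁(τ,s) = τ (s^N − τ^N)/N`. -/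
noncomputable def H₁ (N : ℕ) (τ s : ℝ) : ℝ := τ * (s ^ N - τ ^ N) / N

/-- `G₂(τ,s) = ∫_τ^s u^{N−1} G₁(τ,u) du`. -/
noncomputable def G₂ (N : ℕ) (τ s : ℝ) : ℝ :=
  ∫ u in τ..s, u ^ (N - 1) * G₁ N τ u

/-- `G(τ,r) = −β ∫_τ^r H₁(τ,s) s^{1−N} ds
      + ((4(N−1)β+1)/4) ∫_τ^r G₂(τ,s) s^{1−N} ds`. -/
noncomputable def G (N : ℕ) (β τ r : ℝ) : ℝ :=
  -β * (∫ s in τ..r, H₁ N τ s * s ^ ((1 : ℤ) - N))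
    + ((4 * ((N : ℝ) - 1) * β + 1) / 4)
      * ∫ s in τ..r, G₂ N τ s * s ^ ((1 : ℤ) - N)

/-- The kernel `G` extended by `G(0,r) = 0`. -/
noncomputable def Gext (N : ℕ) (β τ r : ℝ) : ℝ :=
  if τ = 0 then 0 else G N β τ r

/-!
For fixed `τ > 0` every integral in the definition of `G` is an integral of (possibly negative)
powers of the integration variable, so `G(τ, r)` is an explicit combination of
`τ r²`, `τ³`, `τ^(N+1) r^(2-N)` and `τ^(N-1) r^(4-N)`. Integrating these monomials in `τ`
gives the exact value `∫₀^r G(τ, r) dτ = (1 - 4β) r⁴ / (32 N (N + 2))`.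
-/

open Set

theorem integral_zpow_sub_natCast {N : ℕ} {a b : ℝ} (ha : 0 < a) (hb : 0 < b) {k : ℤ}
    (hk : k + 1 ≠ N) :
    ∫ x in a..b, x ^ (k - N) = (b ^ (k + 1) / b ^ N - a ^ (k + 1) / a ^ N) / (k + 1 - N) := by
  rw [integral_zpow (Or.inr ⟨by omega, notMem_uIcc_of_lt ha hb⟩), sub_add_eq_add_sub,
    zpow_sub₀ ha.ne', zpow_sub₀ hb.ne']
  push_cast
  simp only [zpow_natCast]
  ring

section

variable {N : ℕ} {τ r : ℝ}

theorem G₁_eq_of_pos (hN : 2 < N) (hτ : 0 < τ) {u : ℝ} (hu : 0 < u) :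
    G₁ N τ u = (τ - τ ^ (N - 1) / u ^ (N - 2)) / ((N : ℝ) - 2) := by
  have hN₂ : (N : ℝ) - 2 ≠ 0 := sub_ne_zero.mpr (by norm_cast; omega)
  have h2N : 2 - (N : ℝ) ≠ 0 := sub_ne_zero.mpr (by norm_cast; omega)
  rw [G₁, integral_congr (g := fun v ↦ τ ^ (N - 1) * v ^ ((1 : ℤ) - N)) fun v hv ↦ by
    have hv := ne_of_mem_of_not_mem hv (notMem_uIcc_of_lt hτ hu)
    simp only [zpow_sub₀ hv, zpow_one, zpow_natCast, pow_sub₀ _ hv (by omega : 1 ≤ N)]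
    field_simp]
  rw [integral_const_mul, integral_zpow_sub_natCast hτ hu (by omega)]
  norm_num
  simp only [pow_sub₀ _ hu.ne' (by omega : 2 ≤ N), pow_sub₀ _ hτ.ne' (by omega : 1 ≤ N), pow_one]
  field_simp
  ring

theorem G₂_eq_of_pos (hN : 2 < N) (hτ : 0 < τ) {s : ℝ} (hs : 0 < s) :
    G₂ N τ s = (τ * (s ^ N - τ ^ N) / N - τ ^ (N - 1) * (s ^ 2 - τ ^ 2) / 2) / ((N : ℝ) - 2) := by
  rw [G₂, integral_congr (g := fun u ↦ (τ * u ^ (N - 1) - τ ^ (N - 1) * u) / ((N : ℝ) - 2))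
    fun u hu ↦ by
      have hu : 0 < u := (lt_min hτ hs).trans_le hu.1
      simp only [G₁_eq_of_pos hN hτ hu, pow_sub₀ _ hu.ne' (by omega : 1 ≤ N),
        pow_sub₀ _ hu.ne' (by omega : 2 ≤ N)]
      field_simp]
  simp (disch := exact Continuous.intervalIntegrable (by fun_prop) _ _) only [integral_div,
    integral_sub, integral_const_mul, integral_pow, Nat.sub_add_cancel (by omega : 1 ≤ N)]
  rw [integral_const_mul, integral_id]
  push_cast [Nat.cast_sub (by omega : 1 ≤ N), sub_add_cancel]
  field_simp

theorem integral_H₁_mul_zpow (hN : 2 < N) (hτ : 0 < τ) (hr : 0 < r) :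
    ∫ s in τ..r, H₁ N τ s * s ^ ((1 : ℤ) - N) =
      (τ * r ^ 2 - τ ^ 3) / (2 * N) + (τ ^ (N + 1) * r ^ 2 / r ^ N - τ ^ 3) / (N * (N - 2)) := by
  have h0 : (0 : ℝ) ∉ uIcc τ r := notMem_uIcc_of_lt hτ hr
  have hN₂ : (N : ℝ) - 2 ≠ 0 := sub_ne_zero.mpr (by norm_cast; omega)
  have h2N : 2 - (N : ℝ) ≠ 0 := sub_ne_zero.mpr (by norm_cast; omega)
  rw [integral_congr (g := fun s ↦ τ / N * s - τ ^ (N + 1) / N * s ^ ((1 : ℤ) - N))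
    fun s hs ↦ by
      have hs := ne_of_mem_of_not_mem hs h0
      simp only [H₁, zpow_sub₀ hs, zpow_one, zpow_natCast]
      field_simp
      ring]
  simp (disch := exact ContinuousOn.intervalIntegrable (by fun_prop (disch :=
    exact fun x hx ↦ Or.inl (ne_of_mem_of_not_mem hx h0)))) only [integral_sub, integral_const_mul]
  rw [integral_const_mul, integral_id, integral_zpow_sub_natCast hτ hr (by omega)]
  norm_num
  field_simp
  ring

theorem integral_G₂_mul_zpow (hN : 2 < N) (hN4 : N ≠ 4) (hτ : 0 < τ) (hr : 0 < r) :
    ∫ s in τ..r, G₂ N τ s * s ^ ((1 : ℤ) - N) =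
      ((τ * r ^ 2 - τ ^ (N + 1) * r ^ 2 / r ^ N) / (2 * N)
        + (τ ^ (N - 1) * r ^ 4 / r ^ N - τ ^ 3) / (2 * (N - 4))) / (N - 2) := by
  have h0 : (0 : ℝ) ∉ uIcc τ r := notMem_uIcc_of_lt hτ hr
  have h2N : 2 - (N : ℝ) ≠ 0 := sub_ne_zero.mpr (by norm_cast; omega)
  have hN₄ : (N : ℝ) - 4 ≠ 0 := sub_ne_zero.mpr (by norm_cast)
  have h4N : 4 - (N : ℝ) ≠ 0 := sub_ne_zero.mpr (by norm_cast; omega)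
  rw [integral_congr (g := fun s ↦ (τ / N * s + (1 / 2 - 1 / N) * τ ^ (N + 1) * s ^ ((1 : ℤ) - N)
      - τ ^ (N - 1) / 2 * s ^ ((3 : ℤ) - N)) / (N - 2))
    fun s hs ↦ by
      have hs : 0 < s := (lt_min hτ hr).trans_le hs.1
      simp only [G₂_eq_of_pos hN hτ hs, zpow_sub₀ hs.ne', zpow_one, zpow_natCast,
        pow_sub₀ _ hτ.ne' (by omega : 1 ≤ N), pow_one]
      field_simp
      ring]
  simp (disch := exact ContinuousOn.intervalIntegrable (by fun_prop (disch :=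
    exact fun x hx ↦ Or.inl (ne_of_mem_of_not_mem hx h0)))) only [integral_div, integral_add,
    integral_sub, integral_const_mul]
  rw [integral_const_mul, integral_id, integral_zpow_sub_natCast hτ hr (by omega),
    integral_zpow_sub_natCast hτ hr (by omega)]
  norm_num
  simp only [pow_sub₀ _ hτ.ne' (by omega : 1 ≤ N), pow_one]
  field_simp
  ring

theorem integral_integral_H₁_mul_zpow (hN : 2 < N) (hr : 0 < r) :
    ∫ τ in (0 : ℝ)..r, ∫ s in τ..r, H₁ N τ s * s ^ ((1 : ℤ) - N) = r ^ 4 / (8 * (N + 2)) := by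
  have hN₂ : (N : ℝ) - 2 ≠ 0 := sub_ne_zero.mpr (by norm_cast; omega)
  rw [integral_congr_Ioo_of_le hr.le fun τ hτ ↦ integral_H₁_mul_zpow hN hτ.1 hr]
  simp (disch := exact Continuous.intervalIntegrable (by fun_prop) _ _) only [integral_div,
    integral_add, integral_sub, integral_mul_const, integral_pow, integral_id]
  push_cast
  field_simp
  ring

theorem integral_integral_G₂_mul_zpow (hN : 2 < N) (hN4 : N ≠ 4) (hr : 0 < r) :
    ∫ τ in (0 : ℝ)..r, ∫ s in τ..r, G₂ N τ s * s ^ ((1 : ℤ) - N) = r ^ 4 / (8 * N * (N + 2)) := by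
  have hN₂ : (N : ℝ) - 2 ≠ 0 := sub_ne_zero.mpr (by norm_cast; omega)
  have hN₄ : (N : ℝ) - 4 ≠ 0 := sub_ne_zero.mpr (by norm_cast)
  rw [integral_congr_Ioo_of_le hr.le fun τ hτ ↦ integral_G₂_mul_zpow hN hN4 hτ.1 hr]
  simp (disch := exact Continuous.intervalIntegrable (by fun_prop) _ _) only [integral_div,
    integral_add, integral_sub, integral_mul_const, integral_pow, integral_id,
    Nat.sub_add_cancel (by omega : 1 ≤ N)]
  push_cast [Nat.cast_sub (by omega : 1 ≤ N), sub_add_cancel, zero_pow (by omega : N ≠ 0)]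
  field_simp
  ring

theorem integral_Gext (hN : 2 < N) (hN4 : N ≠ 4) (β : ℝ) (hr : 0 < r) :
    ∫ τ in (0 : ℝ)..r, Gext N β τ r = (1 - 4 * β) * r ^ 4 / (32 * N * (N + 2)) := by
  have hH := integral_integral_H₁_mul_zpow hN hr
  have hG := integral_integral_G₂_mul_zpow hN hN4 hr
  -- integrability in `τ` for free: a non-integrable function has integral `0`
  have hH_int := intervalIntegrable_of_integral_ne_zero
    (hH.symm ▸ (by positivity : r ^ 4 / (8 * ((N : ℝ) + 2)) ≠ 0))
  have hG_int := intervalIntegrable_of_integral_ne_zero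
    (hG.symm ▸ (by positivity : r ^ 4 / (8 * (N : ℝ) * (N + 2)) ≠ 0))
  rw [integral_congr_Ioo_of_le (g := fun τ ↦ G N β τ r) hr.le fun τ hτ ↦ by
    rw [Gext, if_neg hτ.1.ne']]
  unfold G
  rw [integral_add (hH_int.const_mul _) (hG_int.const_mul _), integral_const_mul,
    integral_const_mul, hH, hG]
  field_simp
  ring

end

theorem stmt_12_general (N : ℕ) (hN : 2 < N) (hN4 : N ≠ 4) (β : ℝ)
    (hβ₂ : β ≤ 0) :
    ∃ c : ℝ, 0 < c ∧ ∀ r : ℝ, 0 < r →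
      0 ≤ (∫ τ in (0 : ℝ)..r, Gext N β τ r) ∧
        (∫ τ in (0 : ℝ)..r, Gext N β τ r) ≤ c * r ^ 4 := by
  have hc : 0 < (1 - 4 * β) / (32 * N * (N + 2)) := div_pos (by linarith) (by positivity)
  refine ⟨_, hc, fun r hr ↦ ?_⟩
  rw [integral_Gext hN hN4 β hr, mul_div_right_comm]
  exact ⟨by positivity, le_rfl⟩

/-- for `N > 2`, `N ≠ 4` and `−1/(4(N−1)) ≤ β ≤ 0`, there is
`c = c(N,β) > 0` with `0 ≤ ∫_0^r G(τ,r) dτ ≤ c r⁴` for every `r > 0`. -/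
theorem stmt_12 (N : ℕ) (hN : 2 < N) (hN4 : N ≠ 4) (β : ℝ)
    (hβ₁ : -(1 / (4 * ((N : ℝ) - 1))) ≤ β) (hβ₂ : β ≤ 0) :
    ∃ c : ℝ, 0 < c ∧ ∀ r : ℝ, 0 < r →
      0 ≤ (∫ τ in (0 : ℝ)..r, Gext N β τ r) ∧
        (∫ τ in (0 : ℝ)..r, Gext N β τ r) ≤ c * r ^ 4 :=
  stmt_12_general N hN hN4 β hβ₂
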